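/- arXiv:1801.09077 — 6 statements merged into one kernel-verified Lean document; each statement's English description precedes it below -/
import Mathlib

section
/- Let E be a real normed vector space, L' ≥ 0, G : E → E Lipschitz with constant L', U∞ ∈ E with G(U∞) = 0, and ε ≥ 0. Define T_ε : E → E by T_ε(U) = U + ε·G(U). Then for every U ∈ E and every natural number k, ‖(T_ε)^k(U) − U‖ ≤ k·ε·L'·exp(k·ε·L')·‖U − U∞‖. -/
/-- Part (2) of the iterate estimate for the fractional-step reaction operator:
`‖(T_ε)^[k] U − U‖ ≤ k ε L' exp (k ε L') ‖U − Uinf‖`, where `Uinf` is an equilibrium of `G`. -/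
theorem iterate_euler_step_dist_to_start
    {E : Type*} [NormedAddCommGroup E] [NormedSpace ℝ E]
    (L' : ℝ) (hL' : 0 ≤ L')
    (G : E → E) (hG : ∀ U V : E, ‖G U - G V‖ ≤ L' * ‖U - V‖)
    (Uinf : E) (hUinf : G Uinf = 0)
    (ε : ℝ) (hε : 0 ≤ ε)
    (T : E → E) (hT : ∀ U : E, T U = U + ε • G U) :
    ∀ (U : E) (k : ℕ),
      ‖T^[k] U - U‖ ≤ (k : ℝ) * ε * L' * Real.exp ((k : ℝ) * ε * L') * ‖U - Uinf‖ := by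
  intro U k
  -- One-step contraction toward equilibrium
  have hstep : ∀ V : E, ‖T V - Uinf‖ ≤ (1 + ε * L') * ‖V - Uinf‖ := by
    intro V
    have : T V - Uinf = (V - Uinf) + ε • (G V - G Uinf) := by
      rw [hT, hUinf]; simp; abel
    rw [this]
    calc ‖(V - Uinf) + ε • (G V - G Uinf)‖
        ≤ ‖V - Uinf‖ + ‖ε • (G V - G Uinf)‖ := norm_add_le _ _
      _ = ‖V - Uinf‖ + ε * ‖G V - G Uinf‖ := by
          rw [norm_smul, Real.norm_of_nonneg hε]
      _ ≤ ‖V - Uinf‖ + ε * (L' * ‖V - Uinf‖) := by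
          gcongr; exact hG V Uinf
      _ = (1 + ε * L') * ‖V - Uinf‖ := by ring
  -- Iterate bound toward equilibrium
  have hA : ∀ j : ℕ, ‖T^[j] U - Uinf‖ ≤ (1 + ε * L') ^ j * ‖U - Uinf‖ := by
    intro j
    induction j with
    | zero => simp
    | succ j ih =>
        rw [Function.iterate_succ_apply']
        calc ‖T (T^[j] U) - Uinf‖ ≤ (1 + ε * L') * ‖T^[j] U - Uinf‖ := hstep _
          _ ≤ (1 + ε * L') * ((1 + ε * L') ^ j * ‖U - Uinf‖) := by
              gcongr
          _ = (1 + ε * L') ^ (j + 1) * ‖U - Uinf‖ := by ring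
  have hεL : 0 ≤ ε * L' := mul_nonneg hε hL'
  have hexp : ∀ j : ℕ, (1 + ε * L') ^ j ≤ Real.exp ((j : ℝ) * ε * L') := by
    intro j
    calc (1 + ε * L') ^ j ≤ (Real.exp (ε * L')) ^ j := by
          gcongr
          · linarith [Real.add_one_le_exp (ε * L')]
      _ = Real.exp ((j : ℝ) * (ε * L')) := by
          rw [← Real.exp_nat_mul]
      _ = Real.exp ((j : ℝ) * ε * L') := by ring_nf
  induction k with
  | zero => simp
  | succ k ih =>
      have hdiff : ‖T^[k + 1] U - T^[k] U‖ ≤ ε * L' * Real.exp ((k : ℝ) * ε * L') * ‖U - Uinf‖ := by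
        rw [Function.iterate_succ_apply']
        have : T (T^[k] U) - T^[k] U = ε • (G (T^[k] U) - G Uinf) := by
          rw [hT, hUinf]; simp
        rw [this, norm_smul, Real.norm_of_nonneg hε]
        calc ε * ‖G (T^[k] U) - G Uinf‖ ≤ ε * (L' * ‖T^[k] U - Uinf‖) := by
              gcongr; exact hG _ _
          _ ≤ ε * (L' * ((1 + ε * L') ^ k * ‖U - Uinf‖)) := by
              gcongr; exact hA k
          _ ≤ ε * (L' * (Real.exp ((k : ℝ) * ε * L') * ‖U - Uinf‖)) := by
              gcongr
              exact hexp k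
          _ = ε * L' * Real.exp ((k : ℝ) * ε * L') * ‖U - Uinf‖ := by ring
      have hmono : Real.exp ((k : ℝ) * ε * L') ≤ Real.exp (((k : ℝ) + 1) * ε * L') := by
        apply Real.exp_le_exp.mpr
        nlinarith [hεL]
      calc ‖T^[k + 1] U - U‖ ≤ ‖T^[k + 1] U - T^[k] U‖ + ‖T^[k] U - U‖ := by
            have := norm_sub_le_norm_sub_add_norm_sub (T^[k+1] U) (T^[k] U) U
            exact this
        _ ≤ ε * L' * Real.exp ((k : ℝ) * ε * L') * ‖U - Uinf‖
            + (k : ℝ) * ε * L' * Real.exp ((k : ℝ) * ε * L') * ‖U - Uinf‖ := by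
            gcongr
        _ = ((k : ℝ) + 1) * ε * L' * (Real.exp ((k : ℝ) * ε * L') * ‖U - Uinf‖) := by ring
        _ ≤ ((k : ℝ) + 1) * ε * L' * (Real.exp (((k : ℝ) + 1) * ε * L') * ‖U - Uinf‖) := by
            gcongr
        _ = ((k : ℕ) + 1 : ℝ) * ε * L' * Real.exp (((k : ℕ) + 1 : ℝ) * ε * L') * ‖U - Uinf‖ := by
            ring
        _ = _ := by push_cast; ring
end

section
/- Let E be a real normed vector space, L' ≥ 0, G : E → E Lipschitz with constant L', U∞ ∈ E with G(U∞) = 0, and ε ≥ 0. Define T_ε : E → E by T_ε(U) = U + ε·G(U). Then for every U ∈ E and every natural number k, the k-th iterate of the small Euler step differs from the single large Euler step by ‖(T_ε)^k(U) − (U + k·ε·G(U))‖ ≤ k²·ε²·L'²·exp(k·ε·L')·‖U − U∞‖. -/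
/-- Comparison of `k` small reaction Euler steps with one large Euler step:
`‖(T_ε)^[k] U − (U + kε G(U))‖ ≤ k² ε² L'² exp(k ε L') ‖U − Uinf‖`. -/
theorem iterate_euler_step_vs_single_step
    {E : Type*} [NormedAddCommGroup E] [NormedSpace ℝ E]
    (L' : ℝ) (hL' : 0 ≤ L')
    (G : E → E) (hG : ∀ U V : E, ‖G U - G V‖ ≤ L' * ‖U - V‖)
    (Uinf : E) (hUinf : G Uinf = 0)
    (ε : ℝ) (hε : 0 ≤ ε)
    (T : E → E) (hT : ∀ U : E, T U = U + ε • G U) :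
    ∀ (U : E) (k : ℕ),
      ‖T^[k] U - (U + ((k : ℝ) * ε) • G U)‖ ≤
        (k : ℝ) ^ 2 * ε ^ 2 * L' ^ 2 * Real.exp ((k : ℝ) * ε * L') * ‖U - Uinf‖ := by
  intro U k
  set D := ‖U - Uinf‖ with hD
  have hD0 : 0 ≤ D := norm_nonneg _
  have hGU : ‖G U‖ ≤ L' * D := by
    calc ‖G U‖ = ‖G U - G Uinf‖ := by rw [hUinf, sub_zero]
      _ ≤ L' * ‖U - Uinf‖ := hG U Uinf
  set q := ε * L' with hq
  have hq0 : 0 ≤ q := mul_nonneg hε hL'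
  have main : ∀ k : ℕ, ‖T^[k] U - (U + ((k : ℝ) * ε) • G U)‖ ≤
      ε ^ 2 * L' ^ 2 * D * ((k : ℝ) * ((k : ℝ) - 1) / 2) * (1 + q) ^ k := by
    intro k
    induction k with
    | zero => simp
    | succ k ih =>
      have hpow1 : (1 : ℝ) ≤ (1 + q) ^ k := one_le_pow₀ (by linarith)
      have step : T^[k+1] U - (U + (((k : ℝ) + 1) * ε) • G U) =
          (T^[k] U - (U + ((k : ℝ) * ε) • G U)) + ε • (G (T^[k] U) - G U) := by
        rw [Function.iterate_succ_apply', hT]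
        module
      have h1 : ‖T^[k] U - U‖ ≤
          ‖T^[k] U - (U + ((k : ℝ) * ε) • G U)‖ + (k : ℝ) * ε * (L' * D) := by
        have : T^[k] U - U = (T^[k] U - (U + ((k : ℝ) * ε) • G U)) + ((k : ℝ) * ε) • G U := by
          abel
        have hsm : ‖((k : ℝ) * ε) • G U‖ ≤ (k : ℝ) * ε * (L' * D) := by
          rw [norm_smul, Real.norm_eq_abs, abs_of_nonneg (by positivity)]
          exact mul_le_mul_of_nonneg_left hGU (by positivity)
        rw [this]
        exact (norm_add_le _ _).trans (by linarith)
      have h2 : ‖G (T^[k] U) - G U‖ ≤ L' * ‖T^[k] U - U‖ := hG _ _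
      have key : ‖T^[k+1] U - (U + (((k : ℝ) + 1) * ε) • G U)‖ ≤
          (1 + q) * ‖T^[k] U - (U + ((k : ℝ) * ε) • G U)‖ + (k : ℝ) * (ε ^ 2 * L' ^ 2 * D) := by
        rw [step]
        refine (norm_add_le _ _).trans ?_
        have : ‖ε • (G (T^[k] U) - G U)‖ ≤ ε * (L' * (‖T^[k] U - (U + ((k : ℝ) * ε) • G U)‖
            + (k : ℝ) * ε * (L' * D))) := by
          rw [norm_smul, Real.norm_eq_abs, abs_of_nonneg hε]
          exact mul_le_mul_of_nonneg_left (h2.trans (by gcongr)) hε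
        nlinarith [norm_nonneg (T^[k] U - (U + ((k : ℝ) * ε) • G U))]
      push_cast
      refine key.trans ?_
      have hk0 : (0 : ℝ) ≤ k := Nat.cast_nonneg k
      have hbig : (1 + q) * (ε ^ 2 * L' ^ 2 * D * ((k : ℝ) * ((k : ℝ) - 1) / 2) * (1 + q) ^ k)
          + (k : ℝ) * (ε ^ 2 * L' ^ 2 * D) ≤
          ε ^ 2 * L' ^ 2 * D * (((k : ℝ) + 1) * (((k : ℝ) + 1) - 1) / 2) * (1 + q) ^ (k + 1) := by
        have hc : (0 : ℝ) ≤ ε ^ 2 * L' ^ 2 * D := by positivity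
        have e1 : ε ^ 2 * L' ^ 2 * D * (((k : ℝ) + 1) * (((k : ℝ) + 1) - 1) / 2) * (1 + q) ^ (k + 1)
            = (1 + q) * (ε ^ 2 * L' ^ 2 * D * ((k : ℝ) * ((k : ℝ) - 1) / 2) * (1 + q) ^ k)
              + (k : ℝ) * (ε ^ 2 * L' ^ 2 * D) * (1 + q) ^ (k + 1) := by
          ring
        rw [e1]
        have : (k : ℝ) * (ε ^ 2 * L' ^ 2 * D) ≤
            (k : ℝ) * (ε ^ 2 * L' ^ 2 * D) * (1 + q) ^ (k + 1) := by
          nlinarith [one_le_pow₀ (show (1:ℝ) ≤ 1 + q by linarith) (n := k+1),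
            mul_nonneg hk0 hc]
        linarith
      calc (1 + q) * ‖T^[k] U - (U + ((k : ℝ) * ε) • G U)‖ + (k : ℝ) * (ε ^ 2 * L' ^ 2 * D)
          ≤ (1 + q) * (ε ^ 2 * L' ^ 2 * D * ((k : ℝ) * ((k : ℝ) - 1) / 2) * (1 + q) ^ k)
            + (k : ℝ) * (ε ^ 2 * L' ^ 2 * D) := by
            have := mul_le_mul_of_nonneg_left ih (by linarith : (0:ℝ) ≤ 1 + q)
            linarith
        _ ≤ _ := hbig
  refine (main k).trans ?_
  have hpowexp : (1 + q) ^ k ≤ Real.exp ((k : ℝ) * ε * L') := by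
    have h1 : (1 + q) ≤ Real.exp q := by
      have := Real.add_one_le_exp q
      linarith
    calc (1 + q) ^ k ≤ (Real.exp q) ^ k := pow_le_pow_left₀ (by linarith) h1 k
      _ = Real.exp ((k : ℝ) * q) := by rw [← Real.exp_nat_mul]
      _ = Real.exp ((k : ℝ) * ε * L') := by rw [hq, mul_assoc]
  have hk0 : (0 : ℝ) ≤ k := Nat.cast_nonneg k
  have hcoef : (k : ℝ) * ((k : ℝ) - 1) / 2 ≤ (k : ℝ) ^ 2 := by nlinarith
  have hcoef0 : (0 : ℝ) ≤ (k : ℝ) * ((k : ℝ) - 1) / 2 := by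
    rcases Nat.eq_zero_or_pos k with h | h
    · simp [h]
    · have : (1 : ℝ) ≤ k := by exact_mod_cast h
      nlinarith
  calc ε ^ 2 * L' ^ 2 * D * ((k : ℝ) * ((k : ℝ) - 1) / 2) * (1 + q) ^ k
      ≤ ε ^ 2 * L' ^ 2 * D * ((k : ℝ) ^ 2) * Real.exp ((k : ℝ) * ε * L') := by
        have hexp0 : (0:ℝ) < Real.exp ((k : ℝ) * ε * L') := Real.exp_pos _
        have h1 : ε ^ 2 * L' ^ 2 * D * ((k : ℝ) * ((k : ℝ) - 1) / 2) ≤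
            ε ^ 2 * L' ^ 2 * D * ((k : ℝ) ^ 2) := by
          have hc : (0 : ℝ) ≤ ε ^ 2 * L' ^ 2 * D := by positivity
          exact mul_le_mul_of_nonneg_left hcoef hc
        have h2 : (0:ℝ) ≤ ε ^ 2 * L' ^ 2 * D * ((k : ℝ) * ((k : ℝ) - 1) / 2) := by positivity
        calc ε ^ 2 * L' ^ 2 * D * ((k : ℝ) * ((k : ℝ) - 1) / 2) * (1 + q) ^ k
            ≤ ε ^ 2 * L' ^ 2 * D * ((k : ℝ) * ((k : ℝ) - 1) / 2) * Real.exp ((k : ℝ) * ε * L') :=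
              mul_le_mul_of_nonneg_left hpowexp h2
          _ ≤ _ := mul_le_mul_of_nonneg_right h1 hexp0.le
    _ = (k : ℝ) ^ 2 * ε ^ 2 * L' ^ 2 * Real.exp ((k : ℝ) * ε * L') * D := by ring
end

section
/- Let E be a real normed vector space, L' ≥ 1, G : E → E Lipschitz with constant L', U∞ ∈ E with G(U∞) = 0, and let t > 0 and ε satisfy 0 < ε ≤ t². Define T_ε : E → E by T_ε(U) = U + ε·G(U) and set n = ⌊t/ε⌋. Then for every U ∈ E, ‖(T_ε)^n(U) − (U + t·G(U))‖ ≤ 2·t²·L'²·exp(t·L')·‖U − U∞‖. -/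
/-!
Write `x_k = T^[k] U`, `a = ‖U - Uinf‖` and `s = k ε`. Since `G` vanishes at `Uinf`, each
Euler step enlarges the distance to `Uinf` by a factor at most `1 + εL' ≤ e^{εL'}`, so
`‖x_k - Uinf‖ ≤ e^{sL'} a`, and summing the steps gives `‖x_k - U‖ ≤ sL' e^{sL'} a`.
The Euler iterate and the frozen-coefficient path `U + s G(U)` then differ by at most
`Σ εL' ‖x_j - U‖ ≤ (sL')² e^{sL'} a`. For `k = ⌊t/ε⌋` one has `0 ≤ t - s < ε ≤ t²`, and the
remaining gap `(t - s) G(U)` costs at most `t² L' a`.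
-/

open Real

section EulerStep

variable {E : Type*} [NormedAddCommGroup E] {G : E → E} {L ε : ℝ} {Uinf : E}

theorem norm_le_mul_norm_sub_of_apply_eq_zero (hG : ∀ U V : E, ‖G U - G V‖ ≤ L * ‖U - V‖)
    (hUinf : G Uinf = 0) (U : E) : ‖G U‖ ≤ L * ‖U - Uinf‖ := by
  simpa [hUinf] using hG U Uinf

variable [NormedSpace ℝ E]

def eulerStep (ε : ℝ) (G : E → E) (U : E) : E := U + ε • G U

theorem norm_eulerStep_sub_le (hε : 0 ≤ ε) (U V : E) :
    ‖eulerStep ε G U - V‖ ≤ ‖U - V‖ + ε * ‖G U‖ :=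
  calc ‖eulerStep ε G U - V‖ = ‖(U - V) + ε • G U‖ := by
        rw [eulerStep, add_sub_right_comm]
    _ ≤ ‖U - V‖ + ε * ‖G U‖ := by
        grw [norm_add_le, norm_smul, Real.norm_of_nonneg hε]

theorem norm_iterate_eulerStep_sub_le (hε : 0 ≤ ε) (hGU : ∀ U : E, ‖G U‖ ≤ L * ‖U - Uinf‖)
    (U : E) (k : ℕ) :
    ‖(eulerStep ε G)^[k] U - Uinf‖ ≤ exp (k * ε * L) * ‖U - Uinf‖ := by
  induction k with
  | zero => simp
  | succ k ih =>
    set x := (eulerStep ε G)^[k] U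
    have hstep : ‖eulerStep ε G x - Uinf‖ ≤ exp (ε * L) * ‖x - Uinf‖ :=
      calc ‖eulerStep ε G x - Uinf‖ ≤ ‖x - Uinf‖ + ε * (L * ‖x - Uinf‖) := by
            grw [norm_eulerStep_sub_le hε, hGU]
        _ = (ε * L + 1) * ‖x - Uinf‖ := by ring
        _ ≤ exp (ε * L) * ‖x - Uinf‖ := by gcongr; exact add_one_le_exp _
    rw [Function.iterate_succ_apply']
    calc ‖eulerStep ε G x - Uinf‖ ≤ exp (ε * L) * (exp (k * ε * L) * ‖U - Uinf‖) := by
          grw [hstep, ih]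
      _ = exp ((k + 1 : ℕ) * ε * L) * ‖U - Uinf‖ := by
          rw [← mul_assoc, ← exp_add]; push_cast; ring_nf

theorem norm_iterate_eulerStep_sub_self_le (hε : 0 ≤ ε) (hL : 0 ≤ L)
    (hGU : ∀ U : E, ‖G U‖ ≤ L * ‖U - Uinf‖) (U : E) (k : ℕ) :
    ‖(eulerStep ε G)^[k] U - U‖ ≤ k * ε * L * exp (k * ε * L) * ‖U - Uinf‖ := by
  induction k with
  | zero => simp
  | succ k ih =>
    set x := (eulerStep ε G)^[k] U
    rw [Function.iterate_succ_apply']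
    calc ‖eulerStep ε G x - U‖
        ≤ k * ε * L * exp (k * ε * L) * ‖U - Uinf‖
          + ε * (L * (exp (k * ε * L) * ‖U - Uinf‖)) := by
          grw [norm_eulerStep_sub_le hε, ih, hGU, norm_iterate_eulerStep_sub_le hε hGU]
      _ = (k + 1 : ℕ) * ε * L * exp (k * ε * L) * ‖U - Uinf‖ := by push_cast; ring
      _ ≤ (k + 1 : ℕ) * ε * L * exp ((k + 1 : ℕ) * ε * L) * ‖U - Uinf‖ := by
          gcongr; exact k.le_succ

theorem norm_iterate_eulerStep_sub_linear_le (hε : 0 ≤ ε) (hL : 0 ≤ L)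
    (hG : ∀ U V : E, ‖G U - G V‖ ≤ L * ‖U - V‖) (hGU : ∀ U : E, ‖G U‖ ≤ L * ‖U - Uinf‖)
    (U : E) (k : ℕ) :
    ‖(eulerStep ε G)^[k] U - (U + (k * ε) • G U)‖ ≤
      (k * ε * L) ^ 2 * exp (k * ε * L) * ‖U - Uinf‖ := by
  induction k with
  | zero => simp
  | succ k ih =>
    set x := (eulerStep ε G)^[k] U
    have hsplit : eulerStep ε G x - (U + ((k + 1 : ℕ) * ε) • G U)
        = (x - (U + (k * ε) • G U)) + ε • (G x - G U) := by
      simp only [eulerStep, Nat.cast_succ, add_mul, one_mul, add_smul, smul_sub]; abel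
    have hk : (k : ℝ) ^ 2 + k ≤ ((k + 1 : ℕ) : ℝ) ^ 2 := by push_cast; nlinarith
    rw [Function.iterate_succ_apply', hsplit]
    calc ‖(x - (U + (k * ε) • G U)) + ε • (G x - G U)‖
        ≤ (k * ε * L) ^ 2 * exp (k * ε * L) * ‖U - Uinf‖
          + ε * (L * (k * ε * L * exp (k * ε * L) * ‖U - Uinf‖)) := by
          grw [norm_add_le, ih, norm_smul, Real.norm_of_nonneg hε, hG,
            norm_iterate_eulerStep_sub_self_le hε hL hGU]
      _ = ((k : ℝ) ^ 2 + k) * (ε * L) ^ 2 * exp (k * ε * L) * ‖U - Uinf‖ := by ring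
      _ ≤ ((k + 1 : ℕ) : ℝ) ^ 2 * (ε * L) ^ 2 * exp ((k + 1 : ℕ) * ε * L) * ‖U - Uinf‖ := by
          gcongr; exact k.le_succ
      _ = ((k + 1 : ℕ) * ε * L) ^ 2 * exp ((k + 1 : ℕ) * ε * L) * ‖U - Uinf‖ := by ring

end EulerStep

theorem nat_floor_div_mul_le {t ε : ℝ} (ht : 0 ≤ t) (hε : 0 < ε) : ⌊t / ε⌋₊ * ε ≤ t :=
  (le_div_iff₀ hε).mp (Nat.floor_le (by positivity))

theorem sub_lt_nat_floor_div_mul (t : ℝ) {ε : ℝ} (hε : 0 < ε) : t - ε < ⌊t / ε⌋₊ * ε := by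
  have := (div_lt_iff₀ hε).mp (Nat.lt_floor_add_one (t / ε))
  linarith

/-- The `n = ⌊t/ε⌋` iterated small reaction steps differ from the single large step
`U + t G(U)` by at most `2 t² L'² e^{t L'} ‖U − Uinf‖`. -/
theorem iterate_euler_step_vs_time_t_step
    {E : Type*} [NormedAddCommGroup E] [NormedSpace ℝ E]
    (L' : ℝ) (hL' : 1 ≤ L')
    (G : E → E) (hG : ∀ U V : E, ‖G U - G V‖ ≤ L' * ‖U - V‖)
    (Uinf : E) (hUinf : G Uinf = 0)
    (t ε : ℝ) (ht : 0 < t) (hε : 0 < ε) (hεt : ε ≤ t ^ 2)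
    (T : E → E) (hT : ∀ U : E, T U = U + ε • G U)
    (n : ℕ) (hn : n = ⌊t / ε⌋₊) :
    ∀ U : E,
      ‖T^[n] U - (U + t • G U)‖ ≤ 2 * t ^ 2 * L' ^ 2 * Real.exp (t * L') * ‖U - Uinf‖ := by
  intro U
  obtain rfl : T = eulerStep ε G := funext hT
  have hL : 0 ≤ L' := by linarith
  have hGU := norm_le_mul_norm_sub_of_apply_eq_zero hG hUinf
  have hst : n * ε ≤ t := hn ▸ nat_floor_div_mul_le ht.le hε
  have hts : t - n * ε ≤ t ^ 2 := by linarith [hn ▸ sub_lt_nat_floor_div_mul t hε]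
  have hL'_le_sq_mul_exp : L' ≤ L' ^ 2 * exp (t * L') := by
    nlinarith [one_le_exp (show 0 ≤ t * L' by positivity)]
  calc ‖(eulerStep ε G)^[n] U - (U + t • G U)‖
      = ‖((eulerStep ε G)^[n] U - (U + (n * ε) • G U)) + (n * ε - t) • G U‖ := by
        rw [sub_smul]; congr 1; abel
    _ ≤ (n * ε * L') ^ 2 * exp (n * ε * L') * ‖U - Uinf‖
          + (t - n * ε) * (L' * ‖U - Uinf‖) := by
        grw [norm_add_le, norm_iterate_eulerStep_sub_linear_le hε.le hL hG hGU, norm_smul,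
          Real.norm_of_nonpos (by linarith), neg_sub, hGU]
        linarith
    _ ≤ (t * L') ^ 2 * exp (t * L') * ‖U - Uinf‖
          + t ^ 2 * (L' ^ 2 * exp (t * L') * ‖U - Uinf‖) := by
        gcongr
    _ = 2 * t ^ 2 * L' ^ 2 * Real.exp (t * L') * ‖U - Uinf‖ := by ring
end

section
/- Let E be a real normed vector space, let s ⊆ E × ℝ × ℝ be an open convex set, and let q : E × ℝ × ℝ → E be twice continuously differentiable on s with ‖Dq(z)‖ ≤ M₁ and ‖D²q(z)‖ ≤ M₂ for every z ∈ s. Assume q(0, δ, δ) = 0 for every δ with (0,δ,δ) ∈ s, and q(p', 0, 0) = p' for every p' with (p',0,0) ∈ s. Then for any p ∈ E and δ₁, δ₂ ∈ ℝ such that the points (p,δ₁,δ₂), (0,δ₁,δ₂), (p,0,δ₂), (0,0,δ₂), (0,δ₂,δ₂), (p,0,0), (0,0,0) all lie in s, one has ‖q(p, δ₁, δ₂) − p‖ ≤ M₁·|δ₁ − δ₂| + M₂·‖p‖·(|δ₁| + |δ₂|). -/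
/-!
Split `q(p,δ₁,δ₂) - p` as the mixed second difference
`q(p,δ₁,δ₂) - q(p,0,0) - (q(0,δ₁,δ₂) - q(0,0,0))` plus the diagonal difference
`q(0,δ₁,δ₂) - q(0,δ₂,δ₂)`, which is legitimate because `q(p,0,0) = p` and
`q(0,0,0) = q(0,δ₂,δ₂) = 0`. The mean value theorem bounds the diagonal difference by
`M₁ |δ₁ - δ₂|`; applied twice, once in each group of variables, it bounds the mixed
difference by `M₂ ‖p‖ max(|δ₁|, |δ₂|)`.
-/

open Set

section MixedDifference

variable {E F G : Type*} [NormedAddCommGroup E] [NormedSpace ℝ E] [NormedAddCommGroup F]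
  [NormedSpace ℝ F] [NormedAddCommGroup G] [NormedSpace ℝ G] {s : Set (E × F)}

theorem Convex.mk_mem_of_mem_segment_left (hs : Convex ℝ s) {x x' u : E} {y : F}
    (hx' : (x', y) ∈ s) (hx : (x, y) ∈ s) (hu : u ∈ segment ℝ x' x) : (u, y) ∈ s :=
  hs.segment_subset hx' hx (Prod.image_mk_segment_left (𝕜 := ℝ) x' x y ▸ mem_image_of_mem _ hu)

theorem Convex.norm_sub_sub_sub_add_le_of_norm_fderiv_fderiv_le (hs : Convex ℝ s)
    {f : E × F → G} {M : ℝ} (hf : ∀ z ∈ s, DifferentiableAt ℝ f z)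
    (hf' : ∀ z ∈ s, DifferentiableAt ℝ (fderiv ℝ f) z)
    (bound : ∀ z ∈ s, ‖fderiv ℝ (fderiv ℝ f) z‖ ≤ M) {x x' : E} {y y' : F}
    (hxy : (x, y) ∈ s) (hxy' : (x, y') ∈ s) (hx'y : (x', y) ∈ s) (hx'y' : (x', y') ∈ s) :
    ‖f (x, y) - f (x, y') - (f (x', y) - f (x', y'))‖ ≤ M * ‖x - x'‖ * ‖y - y'‖ := by
  have hM : 0 ≤ M := (norm_nonneg (fderiv ℝ (fderiv ℝ f) (x, y))).trans (bound _ hxy)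
  have mem : ∀ u ∈ segment ℝ x' x, (u, y) ∈ s ∧ (u, y') ∈ s := fun u hu ↦
    ⟨hs.mk_mem_of_mem_segment_left hx'y hxy hu, hs.mk_mem_of_mem_segment_left hx'y' hxy' hu⟩
  set g' : E → E →L[ℝ] G := fun u ↦
    (fderiv ℝ f (u, y) - fderiv ℝ f (u, y')).comp (ContinuousLinearMap.inl ℝ E F)
  have hg : ∀ u ∈ segment ℝ x' x,
      HasFDerivWithinAt (fun u ↦ f (u, y) - f (u, y')) (g' u) (segment ℝ x' x) u := by
    intro u hu
    have hy := (hf _ (mem u hu).1).hasFDerivAt.comp u (hasFDerivAt_prodMk_left (𝕜 := ℝ) u y)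
    have hy' := (hf _ (mem u hu).2).hasFDerivAt.comp u (hasFDerivAt_prodMk_left (𝕜 := ℝ) u y')
    simp only [g', ContinuousLinearMap.sub_comp]
    exact (hy.sub hy').hasFDerivWithinAt
  have hg_bound : ∀ u ∈ segment ℝ x' x, ‖g' u‖ ≤ M * ‖y - y'‖ := by
    intro u hu
    calc ‖g' u‖
        ≤ ‖fderiv ℝ f (u, y) - fderiv ℝ f (u, y')‖ * ‖ContinuousLinearMap.inl ℝ E F‖ :=
          ContinuousLinearMap.opNorm_comp_le _ _
      _ ≤ M * ‖(u, y) - (u, y')‖ * 1 := by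
          gcongr
          · exact hs.norm_image_sub_le_of_norm_fderiv_le hf' bound (mem u hu).2 (mem u hu).1
          · exact ContinuousLinearMap.norm_inl_le_one ℝ E F
      _ = M * ‖y - y'‖ := by simp
  have := (convex_segment x' x).norm_image_sub_le_of_norm_hasFDerivWithin_le hg hg_bound
    (left_mem_segment ℝ x' x) (right_mem_segment ℝ x' x)
  simpa only [mul_right_comm] using this

end MixedDifference

section OpenSet

variable {E F : Type*} [NormedAddCommGroup E] [NormedSpace ℝ E] [NormedAddCommGroup F]
  [NormedSpace ℝ F] {s : Set E} {f : E → F} {z : E}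

theorem norm_iteratedFDerivWithin_one_of_isOpen (hs : IsOpen s) (hz : z ∈ s) :
    ‖iteratedFDerivWithin ℝ 1 f s z‖ = ‖fderiv ℝ f z‖ := by
  rw [iteratedFDerivWithin_of_isOpen 1 hs hz, norm_iteratedFDeriv_one]

theorem norm_iteratedFDerivWithin_two_of_isOpen (hs : IsOpen s) (hz : z ∈ s) :
    ‖iteratedFDerivWithin ℝ 2 f s z‖ = ‖fderiv ℝ (fderiv ℝ f) z‖ := by
  rw [iteratedFDerivWithin_of_isOpen 2 hs hz, ← norm_iteratedFDeriv_fderiv (n := 1),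
    norm_iteratedFDeriv_one]

theorem ContDiffOn.differentiableAt_fderiv_of_isOpen (hf : ContDiffOn ℝ 2 f s) (hs : IsOpen s)
    (hz : z ∈ s) : DifferentiableAt ℝ (fderiv ℝ f) z :=
  ((hf.contDiffAt (hs.mem_nhds hz)).fderiv_right (m := 1) le_rfl).differentiableAt one_ne_zero

end OpenSet

theorem wave_strength_reaction_step_estimate_general
    {E : Type*} [NormedAddCommGroup E] [NormedSpace ℝ E]
    (s : Set (E × ℝ × ℝ)) (hs : IsOpen s) (hconv : Convex ℝ s)
    (q : E × ℝ × ℝ → E) (M₁ M₂ : ℝ)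
    (hq : ContDiffOn ℝ 2 q s)
    (hM₁ : ∀ z ∈ s, ‖iteratedFDerivWithin ℝ 1 q s z‖ ≤ M₁)
    (hM₂ : ∀ z ∈ s, ‖iteratedFDerivWithin ℝ 2 q s z‖ ≤ M₂)
    (hq0 : ∀ δ : ℝ, ((0 : E), δ, δ) ∈ s → q (0, δ, δ) = 0)
    (hqid : ∀ p' : E, (p', (0 : ℝ), (0 : ℝ)) ∈ s → q (p', 0, 0) = p')
    (p : E) (δ₁ δ₂ : ℝ)
    (h₁ : (p, δ₁, δ₂) ∈ s) (h₂ : ((0 : E), δ₁, δ₂) ∈ s)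
    (h₅ : ((0 : E), δ₂, δ₂) ∈ s)
    (h₆ : (p, (0 : ℝ), (0 : ℝ)) ∈ s) (h₇ : ((0 : E), (0 : ℝ), (0 : ℝ)) ∈ s) :
    ‖q (p, δ₁, δ₂) - p‖ ≤ M₁ * |δ₁ - δ₂| + M₂ * ‖p‖ * (|δ₁| + |δ₂|) := by
  have hdiff : ∀ z ∈ s, DifferentiableAt ℝ q z := fun z hz ↦
    (hq.differentiableOn two_ne_zero z hz).differentiableAt (hs.mem_nhds hz)
  have hD₁ : ∀ z ∈ s, ‖fderiv ℝ q z‖ ≤ M₁ := fun z hz ↦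
    (norm_iteratedFDerivWithin_one_of_isOpen hs hz).ge.trans (hM₁ z hz)
  have hD₂ : ∀ z ∈ s, ‖fderiv ℝ (fderiv ℝ q) z‖ ≤ M₂ := fun z hz ↦
    (norm_iteratedFDerivWithin_two_of_isOpen hs hz).ge.trans (hM₂ z hz)
  have hM₂_nonneg : 0 ≤ M₂ := (norm_nonneg _).trans (hM₂ _ h₇)
  have mixed := hconv.norm_sub_sub_sub_add_le_of_norm_fderiv_fderiv_le hdiff
    (fun z hz ↦ hq.differentiableAt_fderiv_of_isOpen hs hz) hD₂ h₁ h₆ h₂ h₇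
  have diagonal := hconv.norm_image_sub_le_of_norm_fderiv_le hdiff hD₁ h₅ h₂
  rw [hqid p h₆, hq0 0 h₇, sub_zero, sub_zero] at mixed
  simp only [Prod.mk_sub_mk, sub_zero, sub_self, Prod.norm_mk, Real.norm_eq_abs, norm_zero,
    abs_nonneg, sup_of_le_left, sup_of_le_right] at mixed diagonal
  have hmax : max |δ₁| |δ₂| ≤ |δ₁| + |δ₂| := max_le_add_of_nonneg (abs_nonneg _) (abs_nonneg _)
  calc ‖q (p, δ₁, δ₂) - p‖
      = ‖(q (p, δ₁, δ₂) - p - q (0, δ₁, δ₂)) + (q (0, δ₁, δ₂) - q (0, δ₂, δ₂))‖ := by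
        rw [hq0 δ₂ h₅, sub_zero, sub_add_cancel]
    _ ≤ M₂ * ‖p‖ * max |δ₁| |δ₂| + M₁ * |δ₁ - δ₂| :=
        (norm_add_le _ _).trans (add_le_add mixed diagonal)
    _ ≤ M₁ * |δ₁ - δ₂| + M₂ * ‖p‖ * (|δ₁| + |δ₂|) := by
        rw [add_comm]; gcongr

/-- Abstract form of the wave-strength estimate across a reaction step: if the `C²`
map `q` satisfies `q(0,δ,δ) = 0` and `q(p',0,0) = p'`, with first and second
derivatives bounded by `M₁` and `M₂` on an open convex set `s`, then
`‖q(p,δ₁,δ₂) − p‖ ≤ M₁ |δ₁ − δ₂| + M₂ ‖p‖ (|δ₁| + |δ₂|)`. -/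
theorem wave_strength_reaction_step_estimate
    {E : Type*} [NormedAddCommGroup E] [NormedSpace ℝ E]
    (s : Set (E × ℝ × ℝ)) (hs : IsOpen s) (hconv : Convex ℝ s)
    (q : E × ℝ × ℝ → E) (M₁ M₂ : ℝ)
    (hq : ContDiffOn ℝ 2 q s)
    (hM₁ : ∀ z ∈ s, ‖iteratedFDerivWithin ℝ 1 q s z‖ ≤ M₁)
    (hM₂ : ∀ z ∈ s, ‖iteratedFDerivWithin ℝ 2 q s z‖ ≤ M₂)
    (hq0 : ∀ δ : ℝ, ((0 : E), δ, δ) ∈ s → q (0, δ, δ) = 0)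
    (hqid : ∀ p' : E, (p', (0 : ℝ), (0 : ℝ)) ∈ s → q (p', 0, 0) = p')
    (p : E) (δ₁ δ₂ : ℝ)
    (h₁ : (p, δ₁, δ₂) ∈ s) (h₂ : ((0 : E), δ₁, δ₂) ∈ s) (h₃ : (p, 0, δ₂) ∈ s)
    (h₄ : ((0 : E), 0, δ₂) ∈ s) (h₅ : ((0 : E), δ₂, δ₂) ∈ s)
    (h₆ : (p, (0 : ℝ), (0 : ℝ)) ∈ s) (h₇ : ((0 : E), (0 : ℝ), (0 : ℝ)) ∈ s) :
    ‖q (p, δ₁, δ₂) - p‖ ≤ M₁ * |δ₁ - δ₂| + M₂ * ‖p‖ * (|δ₁| + |δ₂|) :=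
  wave_strength_reaction_step_estimate_general s hs hconv q M₁ M₂ hq hM₁ hM₂ hq0 hqid p δ₁ δ₂ h₁ h₂
    h₅ h₆ h₇
end

section
/- Let f : ℝ → ℝ be a measurable function of finite total variation V = (eVariationOn f (Set.univ)).toReal over the whole line, and let λ ∈ ℝ and θ > 0. Then ∫⁻_ℝ | ∫_0^θ (f(x) − f(x − λ·τ)) dτ | dx ≤ V·|λ|·θ²/2, where the inner integral is a Lebesgue integral in τ over (0,θ) and the outer integral is a lower Lebesgue integral in x. -/
/-!
With the signed variation function `W x = variationOnFromTo f univ 0 x`, which is monotone with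
oscillation at most `V`, one has `|f x - f (x - h)| ≤ W x - W (x - h)` for `h ≥ 0`. Over `[a, b]`
the integral of `W x - W (x - h)` telescopes to `∫_{b-h}^b W - ∫_{a-h}^a W ≤ h (W b - W (a - h))`,
so `∫ |f x - f (x - h)| dx ≤ V |h|`. Moving the absolute value inside the `τ`-integral and
swapping the integrals (Tonelli) then gives `∫_0^θ V |λ| τ dτ = V |λ| θ² / 2`.
-/

open MeasureTheory Set

theorem Monotone.intervalIntegral_sub_comp_sub_le {W : ℝ → ℝ} (hW : Monotone W) {h : ℝ}
    (hh : 0 ≤ h) (a b : ℝ) :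
    ∫ x in a..b, (W x - W (x - h)) ≤ h * (W b - W (a - h)) := by
  have hint : ∀ u v, IntervalIntegrable W volume u v := fun _ _ ↦ hW.intervalIntegrable
  have hshift : Monotone fun x ↦ W (x - h) := hW.comp fun _ _ hxy ↦ sub_le_sub_right hxy h
  rw [intervalIntegral.integral_sub (hint a b) hshift.intervalIntegrable,
    intervalIntegral.integral_comp_sub_right,
    intervalIntegral.integral_interval_sub_interval_comm' (hint _ _) (hint _ _) (hint _ _)]
  have upper : ∫ x in (b - h)..b, W x ≤ ∫ _ in (b - h)..b, W b :=
    intervalIntegral.integral_mono_on (by linarith) (hint _ _) intervalIntegrable_const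
      fun x hx ↦ hW hx.2
  have lower : ∫ _ in (a - h)..a, W (a - h) ≤ ∫ x in (a - h)..a, W x :=
    intervalIntegral.integral_mono_on (by linarith) intervalIntegrable_const (hint _ _)
      fun x hx ↦ hW hx.1
  simp only [intervalIntegral.integral_const, smul_eq_mul, sub_sub_cancel] at upper lower
  linarith

theorem Monotone.lintegral_sub_comp_sub_le {W : ℝ → ℝ} (hW : Monotone W) {C : ℝ}
    (hC : ∀ x y, W x - W y ≤ C) {h : ℝ} (hh : 0 ≤ h) :
    ∫⁻ x, ENNReal.ofReal (W x - W (x - h)) ≤ ENNReal.ofReal (h * C) := by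
  have hballs : Monotone fun n : ℕ ↦ Metric.closedBall (0 : ℝ) n :=
    fun m n hmn ↦ Metric.closedBall_subset_closedBall (by exact_mod_cast hmn)
  rw [← Measure.restrict_univ (μ := volume), ← Metric.iUnion_closedBall_nat 0,
    setLIntegral_iUnion_of_directed _ hballs.directed_le]
  refine iSup_le fun n ↦ ?_
  have hshift : Monotone fun x ↦ W (x - h) := hW.comp fun _ _ hxy ↦ sub_le_sub_right hxy h
  rw [Real.closedBall_eq_Icc, ← ofReal_integral_eq_lintegral_ofReal]
  · gcongr
    rw [integral_Icc_eq_integral_Ioc, ← intervalIntegral.integral_of_le (by simp)]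
    exact (hW.intervalIntegral_sub_comp_sub_le hh _ _).trans
      (mul_le_mul_of_nonneg_left (hC _ _) hh)
  · exact (hW.locallyIntegrable.integrableOn_isCompact isCompact_Icc).sub
      (hshift.locallyIntegrable.integrableOn_isCompact isCompact_Icc)
  · exact ae_of_all _ fun x ↦ sub_nonneg.2 (hW (by simpa using hh))

theorem LocallyBoundedVariationOn.edist_le_ofReal_variationOnFromTo_sub
    {α E : Type*} [LinearOrder α] [PseudoEMetricSpace E] {f : α → E} {s : Set α}
    (hf : LocallyBoundedVariationOn f s) {a b c : α} (ha : a ∈ s) (hb : b ∈ s) (hc : c ∈ s)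
    (hbc : b ≤ c) :
    edist (f b) (f c) ≤
      ENNReal.ofReal (variationOnFromTo f s a c - variationOnFromTo f s a b) := by
  rw [variationOnFromTo.sub_right hf ha hc hb, variationOnFromTo.eq_of_le f s hbc,
    ENNReal.ofReal_toReal (hf b c hb hc)]
  exact eVariationOn.edist_le f ⟨hb, le_rfl, hbc⟩ ⟨hc, hbc, le_rfl⟩

theorem BoundedVariationOn.lintegral_edist_comp_sub_le {E : Type*} [PseudoEMetricSpace E]
    {f : ℝ → E} (hf : BoundedVariationOn f univ) (h : ℝ) :
    ∫⁻ x, edist (f x) (f (x - h)) ≤ eVariationOn f univ * ENNReal.ofReal |h| := by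
  wlog hh : 0 ≤ h generalizing h
  · calc ∫⁻ x, edist (f x) (f (x - h))
        = ∫⁻ x, (fun y ↦ edist (f y) (f (y - -h))) (x - h) := by
          simp only [sub_neg_eq_add, sub_add_cancel, edist_comm]
      _ = ∫⁻ y, edist (f y) (f (y - -h)) :=
          lintegral_sub_right_eq_self (μ := volume) (fun y ↦ edist (f y) (f (y - -h))) h
      _ ≤ eVariationOn f univ * ENNReal.ofReal |h| := by
          simpa only [abs_neg] using this (-h) (by linarith)
  have hloc := hf.locallyBoundedVariationOn
  set W := variationOnFromTo f univ 0
  have hW : Monotone W := monotoneOn_univ.1 (variationOnFromTo.monotoneOn hloc (mem_univ 0))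
  have hWC : ∀ x y, W x - W y ≤ (eVariationOn f univ).toReal := fun x y ↦ by
    rw [variationOnFromTo.sub_right hloc (mem_univ _) (mem_univ _) (mem_univ _)]
    exact (le_abs_self _).trans (variationOnFromTo.abs_le_eVariationOn hf)
  calc ∫⁻ x, edist (f x) (f (x - h))
      ≤ ∫⁻ x, ENNReal.ofReal (W x - W (x - h)) := lintegral_mono fun x ↦ by
        rw [edist_comm]
        exact hloc.edist_le_ofReal_variationOnFromTo_sub (mem_univ _) (mem_univ _) (mem_univ _)
          (by linarith)
    _ ≤ ENNReal.ofReal (h * (eVariationOn f univ).toReal) := hW.lintegral_sub_comp_sub_le hWC hh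
    _ = eVariationOn f univ * ENNReal.ofReal |h| := by
        rw [abs_of_nonneg hh, mul_comm, ENNReal.ofReal_mul ENNReal.toReal_nonneg,
          ENNReal.ofReal_toReal hf]

theorem LocallyBoundedVariationOn.measurable {α : Type*} [LinearOrder α] [TopologicalSpace α]
    [OrderClosedTopology α] [MeasurableSpace α] [BorelSpace α] {f : α → ℝ}
    (hf : LocallyBoundedVariationOn f univ) : Measurable f := by
  obtain ⟨p, q, hp, hq, rfl⟩ := hf.exists_monotoneOn_sub_monotoneOn
  exact (monotoneOn_univ.1 hp).measurable.sub (monotoneOn_univ.1 hq).measurable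

theorem setLIntegral_Ioo_zero_ofReal_le (θ : ℝ) :
    ∫⁻ τ in Ioo 0 θ, ENNReal.ofReal τ ≤ ENNReal.ofReal (θ ^ 2 / 2) := by
  rcases le_or_gt θ 0 with hθ | hθ
  · simp [Ioo_eq_empty_of_le hθ]
  rw [← ofReal_integral_eq_lintegral_ofReal, integral_Ioc_eq_integral_Ioo.symm,
    ← intervalIntegral.integral_of_le hθ.le, integral_id]
  · simp
  · exact continuous_id.integrableOn_Icc.mono_set Ioo_subset_Icc_self
  · exact (ae_restrict_mem measurableSet_Ioo).mono fun τ hτ ↦ hτ.1.le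

theorem time_averaged_translation_estimate_of_BV_general
    (f : ℝ → ℝ) (hf : eVariationOn f Set.univ ≠ ⊤)
    (l θ : ℝ) :
    ∫⁻ x : ℝ, ENNReal.ofReal |∫ τ in Set.Ioo (0 : ℝ) θ, (f x - f (x - l * τ))| ≤
      ENNReal.ofReal ((eVariationOn f Set.univ).toReal * |l| * θ ^ 2 / 2) := by
  have hf' : BoundedVariationOn f univ := hf
  have hmeas : Measurable f := hf'.locallyBoundedVariationOn.measurable
  calc ∫⁻ x, ENNReal.ofReal |∫ τ in Ioo 0 θ, (f x - f (x - l * τ))|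
      ≤ ∫⁻ x, ∫⁻ τ in Ioo 0 θ, edist (f x) (f (x - l * τ)) := lintegral_mono fun x ↦ by
        simpa only [Real.enorm_eq_ofReal_abs, edist_eq_enorm_sub] using
          enorm_integral_le_lintegral_enorm (μ := volume.restrict (Ioo 0 θ))
            fun τ ↦ f x - f (x - l * τ)
    _ = ∫⁻ τ in Ioo 0 θ, ∫⁻ x, edist (f x) (f (x - l * τ)) :=
        lintegral_lintegral_swap (by fun_prop)
    _ ≤ ∫⁻ τ in Ioo 0 θ, eVariationOn f univ * ENNReal.ofReal |l| * ENNReal.ofReal τ :=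
        setLIntegral_mono' measurableSet_Ioo fun τ hτ ↦
          (hf'.lintegral_edist_comp_sub_le _).trans_eq <| by
            rw [abs_mul, abs_of_pos hτ.1, ENNReal.ofReal_mul (abs_nonneg l), mul_assoc]
    _ = eVariationOn f univ * ENNReal.ofReal |l| * ∫⁻ τ in Ioo 0 θ, ENNReal.ofReal τ :=
        lintegral_const_mul _ ENNReal.measurable_ofReal
    _ ≤ eVariationOn f univ * ENNReal.ofReal |l| * ENNReal.ofReal (θ ^ 2 / 2) := by
        gcongr; exact setLIntegral_Ioo_zero_ofReal_le θ
    _ = ENNReal.ofReal ((eVariationOn f univ).toReal * |l| * θ ^ 2 / 2) := by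
        rw [mul_div_assoc, ENNReal.ofReal_mul (by positivity),
          ENNReal.ofReal_mul ENNReal.toReal_nonneg, ENNReal.ofReal_toReal hf]

/-- Time-averaged translation estimate for a function of bounded variation:
`∫⁻_ℝ |∫_0^θ (f(x) − f(x − λτ)) dτ| dx ≤ V |λ| θ²/2`, where
`V = (eVariationOn f Set.univ).toReal`. -/
theorem time_averaged_translation_estimate_of_BV
    (f : ℝ → ℝ) (hmeas : Measurable f) (hf : eVariationOn f Set.univ ≠ ⊤)
    (l θ : ℝ) (hθ : 0 < θ) :
    ∫⁻ x : ℝ, ENNReal.ofReal |∫ τ in Set.Ioo (0 : ℝ) θ, (f x - f (x - l * τ))| ≤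
      ENNReal.ofReal ((eVariationOn f Set.univ).toReal * |l| * θ ^ 2 / 2) :=
  time_averaged_translation_estimate_of_BV_general f hf l θ
end

section
/- Let V be a real normed vector space, L ≥ 0, and g : V → V Lipschitz with constant L. Let u : ℝ → V, let S assign to each t ≥ 0 and each function w : ℝ → V a function S_t w : ℝ → V, and suppose there are constants C, C₃, κ, ε ≥ 0 such that for every t ≥ 0: (i) for all functions w₁, w₂, ω : ℝ → V, ∫⁻_ℝ ‖S_t w₁(x) − S_t w₂(x) − ω(x)‖ dx ≤ C·( ∫⁻_ℝ ‖w₁(x) − w₂(x) − ω(x)‖ dx + t·(ε + TV(ω)) ), where TV(ω) denotes the total variation eVariationOn ω (Set.univ); (ii) ∫⁻_ℝ ‖S_t u(x) − u(x)‖ dx ≤ C₃·t; (iii) TV(S_t u) ≤ κ. Then for every t ≥ 0, ∫⁻_ℝ ‖S_t(u + t·(g∘u))(x) − ( S_t u(x) + t·g(S_t u(x)) )‖ dx ≤ C·L·(C₃ + κ)·t² + C·ε·t. -/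
open MeasureTheory

/-- Abstract commutation estimate between a conservation-law solver `S` and the
reaction Euler step `T_t(w) = w + t·(g ∘ w)`:
`‖S_t T_t(u) − T_t S_t(u)‖_{L¹} ≤ C L (C₃ + κ) t² + C ε t`. -/
theorem commutation_estimate
    {V : Type*} [NormedAddCommGroup V] [NormedSpace ℝ V]
    (L : ℝ) (hL : 0 ≤ L)
    (g : V → V) (hg : ∀ x y : V, ‖g x - g y‖ ≤ L * ‖x - y‖)
    (u : ℝ → V) (S : ℝ → (ℝ → V) → (ℝ → V))
    (C C₃ κ ε : ℝ) (hC : 0 ≤ C) (hC₃ : 0 ≤ C₃) (hκ : 0 ≤ κ) (hε : 0 ≤ ε)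
    (hstab : ∀ t : ℝ, 0 ≤ t → ∀ w₁ w₂ ω : ℝ → V,
      (∫⁻ x : ℝ, ENNReal.ofReal ‖S t w₁ x - S t w₂ x - ω x‖) ≤
        ENNReal.ofReal C * ((∫⁻ x : ℝ, ENNReal.ofReal ‖w₁ x - w₂ x - ω x‖) +
          ENNReal.ofReal t * (ENNReal.ofReal ε + eVariationOn ω Set.univ)))
    (hlip : ∀ t : ℝ, 0 ≤ t →
      (∫⁻ x : ℝ, ENNReal.ofReal ‖S t u x - u x‖) ≤ ENNReal.ofReal (C₃ * t))
    (htv : ∀ t : ℝ, 0 ≤ t → eVariationOn (S t u) Set.univ ≤ ENNReal.ofReal κ) :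
    ∀ t : ℝ, 0 ≤ t →
      (∫⁻ x : ℝ, ENNReal.ofReal
          ‖S t (fun y => u y + t • g (u y)) x - (S t u x + t • g (S t u x))‖) ≤
        ENNReal.ofReal (C * L * (C₃ + κ) * t ^ 2 + C * ε * t) := by
  intro t ht
  have key := hstab t ht (fun y => u y + t • g (u y)) u (fun x => t • g (S t u x))
  have hre : ∀ x : ℝ, S t (fun y => u y + t • g (u y)) x - S t u x - t • g (S t u x)
      = S t (fun y => u y + t • g (u y)) x - (S t u x + t • g (S t u x)) := by
    intro x; abel
  simp only [hre] at key
  refine key.trans ?_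
  -- bound the integral term
  have hI : (∫⁻ x : ℝ, ENNReal.ofReal ‖(u x + t • g (u x)) - u x - t • g (S t u x)‖)
      ≤ ENNReal.ofReal (L * (C₃ * t) * t) := by
    have hpt : ∀ x : ℝ, ENNReal.ofReal ‖(u x + t • g (u x)) - u x - t • g (S t u x)‖
        ≤ ENNReal.ofReal (t * L) * ENNReal.ofReal ‖S t u x - u x‖ := by
      intro x
      rw [← ENNReal.ofReal_mul (by positivity)]
      apply ENNReal.ofReal_le_ofReal
      have h1 : (u x + t • g (u x)) - u x - t • g (S t u x) = t • (g (u x) - g (S t u x)) := by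
        rw [smul_sub]; abel
      rw [h1, norm_smul, Real.norm_eq_abs, abs_of_nonneg ht]
      have := hg (u x) (S t u x)
      calc t * ‖g (u x) - g (S t u x)‖ ≤ t * (L * ‖u x - S t u x‖) := by
            exact mul_le_mul_of_nonneg_left this ht
        _ = t * L * ‖S t u x - u x‖ := by rw [norm_sub_rev]; ring
    calc (∫⁻ x : ℝ, ENNReal.ofReal ‖(u x + t • g (u x)) - u x - t • g (S t u x)‖)
        ≤ ∫⁻ x : ℝ, ENNReal.ofReal (t * L) * ENNReal.ofReal ‖S t u x - u x‖ :=
          lintegral_mono hpt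
      _ = ENNReal.ofReal (t * L) * ∫⁻ x : ℝ, ENNReal.ofReal ‖S t u x - u x‖ :=
          lintegral_const_mul' _ _ ENNReal.ofReal_ne_top
      _ ≤ ENNReal.ofReal (t * L) * ENNReal.ofReal (C₃ * t) := by
          exact mul_le_mul_right (hlip t ht) _
      _ = ENNReal.ofReal (L * (C₃ * t) * t) := by
          rw [← ENNReal.ofReal_mul (by positivity)]; ring_nf
  -- bound the TV term
  have hTV : eVariationOn (fun x => t • g (S t u x)) Set.univ ≤ ENNReal.ofReal (t * L * κ) := by
    have hlipf : LipschitzOnWith ((t * L).toNNReal) (fun v : V => t • g v) Set.univ := by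
      apply LipschitzOnWith.of_dist_le_mul
      intro x _ y _
      rw [Real.coe_toNNReal _ (by positivity), dist_eq_norm, dist_eq_norm,
        ← smul_sub, norm_smul, Real.norm_eq_abs, abs_of_nonneg ht]
      calc t * ‖g x - g y‖ ≤ t * (L * ‖x - y‖) := mul_le_mul_of_nonneg_left (hg x y) ht
        _ = t * L * ‖x - y‖ := by ring
    have := hlipf.comp_eVariationOn_le (g := S t u) (s := Set.univ) (Set.mapsTo_univ _ _)
    refine this.trans ?_
    calc ((t * L).toNNReal : ENNReal) * eVariationOn (S t u) Set.univ
        ≤ ENNReal.ofReal (t * L) * ENNReal.ofReal κ := by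
          rw [ENNReal.ofReal]; exact mul_le_mul_right (htv t ht) _
      _ = ENNReal.ofReal (t * L * κ) := by rw [← ENNReal.ofReal_mul (by positivity)]
  calc ENNReal.ofReal C * ((∫⁻ x : ℝ, ENNReal.ofReal ‖(u x + t • g (u x)) - u x - t • g (S t u x)‖) +
          ENNReal.ofReal t * (ENNReal.ofReal ε + eVariationOn (fun x => t • g (S t u x)) Set.univ))
      ≤ ENNReal.ofReal C * (ENNReal.ofReal (L * (C₃ * t) * t) +
          ENNReal.ofReal t * (ENNReal.ofReal ε + ENNReal.ofReal (t * L * κ))) := by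
        gcongr
    _ = ENNReal.ofReal (C * (L * (C₃ * t) * t + t * (ε + t * L * κ))) := by
        rw [← ENNReal.ofReal_add hε (by positivity), ← ENNReal.ofReal_mul ht,
          ← ENNReal.ofReal_add (by positivity) (by positivity),
          ← ENNReal.ofReal_mul hC]
    _ = ENNReal.ofReal (C * L * (C₃ + κ) * t ^ 2 + C * ε * t) := by ring_nf
end
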